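/- arXiv:2301.04624 — 2 statements merged into one kernel-verified Lean document; each statement's English description precedes it below -/
import Mathlib

section
/- Let k ≥ 3 and let d, D be positive integers with k ≤ dD, and let C_k and C_{k−1} be the associated transfer matrices (both defined with the same parameters d, D). For a permutation ρ ∈ S_k with ρ(k) = k, let ρ↓ ∈ S_{k−1} denote its restriction to a permutation of {1,…,k−1}. Then for every θ ∈ S_k with θ(k) = k and every τ ∈ S_k, one has ⟨τ|C_k|θ⟩ = δ_{k, τ(k)} · ⟨τ↓|C_{k−1}|θ↓⟩; in particular ⟨τ|C_k|θ⟩ = 0 whenever τ(k) ≠ k and θ(k) = k. -/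
open Equiv Matrix

/-- Number of cycles of a permutation, counting fixed points as 1-cycles. -/
noncomputable def cyc {k : ℕ} (π : Equiv.Perm (Fin k)) : ℕ :=
  (k - π.cycleType.sum) + Multiset.card π.cycleType

/-- Gram matrix `G(q)_{στ} = q^{#(στ⁻¹)}`. -/
noncomputable def Gram (k q : ℕ) :
    Matrix (Equiv.Perm (Fin k)) (Equiv.Perm (Fin k)) ℝ :=
  Matrix.of fun σ τ => (q : ℝ) ^ cyc (σ * τ⁻¹)

/-- Weingarten matrix `W = G(q)⁻¹`, so that `Wg(στ⁻¹, q) = W σ τ`. -/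
noncomputable def WgM (k q : ℕ) :
    Matrix (Equiv.Perm (Fin k)) (Equiv.Perm (Fin k)) ℝ :=
  (Gram k q)⁻¹

/-- Transfer matrix `⟨τ|C_k|θ⟩ = Σ_σ Wg(στ⁻¹, dD) d^{#(σ)} D^{#(σθ⁻¹)}`. -/
noncomputable def Ck (k d D : ℕ) :
    Matrix (Equiv.Perm (Fin k)) (Equiv.Perm (Fin k)) ℝ :=
  Matrix.of fun τ θ =>
    ∑ σ : Equiv.Perm (Fin k),
      WgM k (d * D) σ τ * (d : ℝ) ^ cyc σ * (D : ℝ) ^ cyc (σ * θ⁻¹)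

/-- Restriction of a permutation of `{1,…,n+1}` fixing the last element to a permutation
of `{1,…,n}` (implemented via removal of the last point). -/
noncomputable def restrictLast {n : ℕ} (ρ : Equiv.Perm (Fin (n + 1))) : Equiv.Perm (Fin n) :=
  Equiv.removeNone (finSuccEquivLast.permCongr ρ)

/-!
Column `θ` of `C_k` is the unique solution `u` of `G(dD) u = b_θ`, where
`b_θ(σ) = d^{#σ} D^{#(σθ⁻¹)}`: the matrix `G(q)` is symmetric, and for `k ≤ q` it is
invertible, being the Gram matrix of the permutation operators on `(ℝ^q)^{⊗k}`, which are
linearly independent (test them on an injective colouring `[k] → [q]`).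

Cycles are counted by colourings: `q^{#π}` is the number of `π`-invariant maps `[k] → [q]`.
This shows that deleting the point `k` from `π` lowers `#π` by one if `π` fixes `k` and leaves
it unchanged otherwise. So for `θ` fixing `k`, both `#σ` and `#(σθ⁻¹)` drop by
`[σ(k) = k]` under restriction, and the extension by zero of column `θ↓` of `C_{k-1}` solves
`G(dD) u = b_θ` as well: each row picks up the same factor `(dD)^{[σ(k) = k]}`.
-/

namespace Equiv.Perm

variable {α β : Type*}

theorem SameCycle.apply_eq_of_comp_eq [Finite α] {σ : Perm α} {f : α → β} (hf : f ∘ σ = f)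
    {a b : α} (h : σ.SameCycle a b) : f a = f b := by
  have hpow (i : ℕ) : f ∘ ⇑(σ ^ i) = f := by
    induction i with
    | zero => simp
    | succ i ih => rw [pow_succ, coe_mul, ← Function.comp_assoc, ih, hf]
  obtain ⟨i, -, rfl⟩ := h.exists_pow_eq'
  exact (congrFun (hpow i) a).symm

section CycleCount

variable [Fintype α] [DecidableEq α]

noncomputable def cycleClass (σ : Perm α) (a : α) :
    Function.fixedPoints σ ⊕ σ.cycleFactorsFinset :=
  if h : σ a = a then .inl ⟨a, h⟩
  else .inr ⟨σ.cycleOf a, cycleOf_mem_cycleFactorsFinset_iff.2 (mem_support.2 h)⟩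

theorem cycleClass_apply_self (σ : Perm α) (a : α) : σ.cycleClass (σ a) = σ.cycleClass a := by
  by_cases h : σ a = a
  · simp only [cycleClass, h]
  · have h' : σ (σ a) ≠ σ a := fun h' => h (σ.injective h')
    simp only [cycleClass, h, h', dite_false, cycleOf_self_apply]

theorem sameCycle_of_cycleClass_eq {σ : Perm α} {a b : α}
    (h : σ.cycleClass a = σ.cycleClass b) : σ.SameCycle a b := by
  unfold cycleClass at h
  split_ifs at h with ha hb hb <;>
    simp only [Sum.inl.injEq, Sum.inr.injEq, Subtype.mk.injEq] at h
  · rw [show a = b from congrArg Subtype.val h]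
  · have hb' : b ∈ (σ.cycleOf a).support :=
      h ▸ mem_support_cycleOf_iff.2 ⟨.rfl, mem_support.2 hb⟩
    exact (mem_support_cycleOf_iff.1 hb').1

theorem cycleClass_surjective (σ : Perm α) : Function.Surjective σ.cycleClass := by
  rintro (⟨a, ha⟩ | ⟨c, hc⟩)
  · exact ⟨a, by simp only [cycleClass, show σ a = a from ha, dite_true]⟩
  · obtain ⟨a, ha⟩ := (mem_cycleFactorsFinset_iff.1 hc).1.nonempty_support
    have hσa : σ a ≠ a := mem_support.1 (mem_cycleFactorsFinset_support_le hc ha)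
    refine ⟨a, ?_⟩
    simp only [cycleClass, hσa, dite_false, Sum.inr.injEq, Subtype.mk.injEq]
    exact (cycle_is_cycleOf ha hc).symm

theorem card_fixedPoints_sum_cycleFactorsFinset (σ : Perm α) :
    Nat.card (Function.fixedPoints σ ⊕ σ.cycleFactorsFinset) = σ.partition.parts.card := by
  rw [Nat.card_sum, Nat.card_eq_fintype_card, card_fixedPoints, Nat.card_eq_fintype_card,
    Fintype.card_coe, parts_partition, Multiset.card_add, Multiset.card_replicate,
    sum_cycleType, cycleType_def, Multiset.card_map, add_comm]
  rfl

theorem card_comp_eq_self [Finite β] (σ : Perm α) :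
    Nat.card {f : α → β // f ∘ σ = f} = Nat.card β ^ σ.partition.parts.card := by
  have hrange : {f : α → β | f ∘ σ = f} = Set.range (· ∘ σ.cycleClass) := by
    ext f
    refine ⟨fun hf => ⟨f ∘ Function.surjInv σ.cycleClass_surjective, funext fun a => ?_⟩, ?_⟩
    · exact SameCycle.apply_eq_of_comp_eq hf
        (sameCycle_of_cycleClass_eq (Function.surjInv_eq σ.cycleClass_surjective _))
    · rintro ⟨g, rfl⟩
      exact funext fun a => congrArg g (σ.cycleClass_apply_self a)
  rw [← Set.coe_ofPred, hrange,
    Nat.card_range_of_injective σ.cycleClass_surjective.injective_comp_right, Nat.card_fun,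
    card_fixedPoints_sum_cycleFactorsFinset]

end CycleCount

section RemoveNone

theorem card_comp_optionCongr_eq_self (σ : Perm α) :
    Nat.card {f : Option α → β // f ∘ σ.optionCongr = f} =
      Nat.card {g : α → β // g ∘ σ = g} * Nat.card β := by
  rw [← Nat.card_prod]
  exact Nat.card_congr
    { toFun := fun f => (⟨f.1 ∘ some, funext fun a => congrFun f.2 (some a)⟩, f.1 none)
      invFun := fun p => ⟨fun o => o.elim p.2 p.1.1,
        funext fun o => by cases o; exacts [rfl, congrFun p.1.2 _]⟩
      left_inv := fun f => Subtype.ext (funext fun o => by cases o <;> rfl)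
      right_inv := fun p => rfl }

variable [DecidableEq α]

theorem comp_swap_eq_self_iff {f : α → β} {x y : α} : f ∘ swap x y = f ↔ f x = f y := by
  refine ⟨fun h => by simpa using congrFun h y, fun h => funext fun z => ?_⟩
  rcases eq_or_ne z x with rfl | hx
  · simp [h]
  rcases eq_or_ne z y with rfl | hy
  · simp [h]
  · simp [swap_apply_of_ne_of_ne hx hy]

theorem removeNone_mul_optionCongr (e : Perm (Option α)) (σ : Perm α) :
    removeNone (e * σ.optionCongr) = removeNone e * σ := by
  have hmul (σ τ : Perm α) : (σ * τ).optionCongr = σ.optionCongr * τ.optionCongr :=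
    optionCongr_trans τ σ
  apply optionCongr_injective
  rw [map_equiv_removeNone, hmul, map_equiv_removeNone, coe_mul, Function.comp_apply,
    optionCongr_apply, Option.map_none, mul_assoc]

theorem comp_eq_self_iff_of_apply_none_eq_some {e : Perm (Option α)} {b : α}
    (hb : e none = some b) {f : Option α → β} :
    f ∘ e = f ↔ f none = f (some b) ∧ f ∘ (removeNone e).optionCongr = f := by
  have he : ⇑(swap none (some b)) ∘ ⇑(removeNone e).optionCongr = e := by
    rw [← coe_mul, map_equiv_removeNone, hb, ← mul_assoc, swap_mul_self, one_mul]
  constructor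
  · intro hf
    have hfb : f none = f (some b) := by rw [← hb]; exact (congrFun hf none).symm
    refine ⟨hfb, ?_⟩
    calc f ∘ (removeNone e).optionCongr
        = (f ∘ swap none (some b)) ∘ (removeNone e).optionCongr := by
          rw [comp_swap_eq_self_iff.2 hfb]
      _ = f := by rw [Function.comp_assoc, he, hf]
  · rintro ⟨hfb, hf⟩
    rw [← he, ← Function.comp_assoc, comp_swap_eq_self_iff.2 hfb, hf]

theorem card_comp_eq_self_of_apply_none_eq_some {e : Perm (Option α)} {b : α}
    (hb : e none = some b) :
    Nat.card {f : Option α → β // f ∘ e = f} =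
      Nat.card {g : α → β // g ∘ removeNone e = g} := by
  simp_rw [comp_eq_self_iff_of_apply_none_eq_some hb]
  exact Nat.card_congr
    { toFun := fun f => ⟨f.1 ∘ some, funext fun a => congrFun f.2.2 (some a)⟩
      invFun := fun g => ⟨fun o => o.elim (g.1 b) g.1,
        rfl, funext fun o => by cases o; exacts [rfl, congrFun g.2 _]⟩
      left_inv := fun f =>
        Subtype.ext (funext fun o => by cases o; exacts [f.2.1.symm, rfl])
      right_inv := fun g => rfl }

end RemoveNone

variable [Fintype α] [DecidableEq α]

theorem card_parts_partition_permCongr {γ : Type*} [Fintype γ] [DecidableEq γ] (e : α ≃ γ)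
    (σ : Perm α) : (e.permCongr σ).partition.parts.card = σ.partition.parts.card := by
  apply Nat.pow_right_injective le_rfl
  have hcomp (f : γ → Bool) : f ∘ e.permCongr σ = f ↔ (f ∘ e) ∘ σ = f ∘ e := by
    rw [← Equiv.comp_symm_eq]
    rfl
  have h := Nat.card_congr (Equiv.subtypeEquiv
    (p := fun f : γ → Bool => f ∘ e.permCongr σ = f) (q := fun g : α → Bool => g ∘ σ = g)
    (e.arrowCongr (Equiv.refl Bool)).symm hcomp)
  rw [card_comp_eq_self, card_comp_eq_self, Nat.card_eq_fintype_card, Fintype.card_bool] at h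
  exact h

theorem card_parts_partition_option (e : Perm (Option α)) :
    e.partition.parts.card =
      (partition (removeNone e)).parts.card + if e none = none then 1 else 0 := by
  apply Nat.pow_right_injective le_rfl
  have hcard (σ : Perm α) := card_comp_eq_self (β := Bool) σ
  have hcard' := card_comp_eq_self (β := Bool) e
  simp only [Nat.card_eq_fintype_card (α := Bool), Fintype.card_bool] at hcard hcard'
  dsimp only
  rcases he : e none with _ | b
  · have he' : (removeNone e).optionCongr = e := by
      rw [map_equiv_removeNone, he, swap_self, ← one_def, one_mul]
    have h := card_comp_optionCongr_eq_self (β := Bool) (removeNone e)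
    rw [he', hcard', hcard] at h
    simp [h, pow_succ]
  · rw [← hcard', card_comp_eq_self_of_apply_none_eq_some he, hcard]
    simp

end Equiv.Perm

open Equiv.Perm

theorem cyc_eq_card_parts {k : ℕ} (π : Perm (Fin k)) : cyc π = π.partition.parts.card := by
  rw [cyc, parts_partition, Multiset.card_add, Multiset.card_replicate, sum_cycleType,
    Fintype.card_fin, add_comm]

theorem cyc_inv {k : ℕ} (π : Perm (Fin k)) : cyc π⁻¹ = cyc π := by
  simp only [cyc, cycleType_inv]

theorem cyc_eq_cyc_restrictLast_add {n : ℕ} (ρ : Perm (Fin (n + 1))) :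
    cyc ρ = cyc (restrictLast ρ) + if ρ (Fin.last n) = Fin.last n then 1 else 0 := by
  rw [cyc_eq_card_parts, cyc_eq_card_parts, ← card_parts_partition_permCongr finSuccEquivLast,
    card_parts_partition_option]
  simp [restrictLast, ← Equiv.eq_symm_apply]

section LiftLast

variable {n : ℕ}

variable (n) in
noncomputable def liftLast : Perm (Fin n) →* Perm (Fin (n + 1)) where
  toFun τ := finSuccEquivLast.symm.permCongr τ.optionCongr
  map_one' := by ext; simp [permCongr_apply]
  map_mul' σ τ := by
    rw [← Equiv.permCongr_mul]
    exact congrArg _ (optionCongr_trans τ σ)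

theorem permCongr_liftLast (τ : Perm (Fin n)) :
    finSuccEquivLast.permCongr (liftLast n τ) = τ.optionCongr :=
  finSuccEquivLast.permCongr.apply_symm_apply _

theorem liftLast_apply_last (τ : Perm (Fin n)) : liftLast n τ (Fin.last n) = Fin.last n := by
  simpa [permCongr_apply, ← Equiv.eq_symm_apply] using
    congrFun (congrArg DFunLike.coe (permCongr_liftLast τ)) none

theorem restrictLast_mul_liftLast (σ : Perm (Fin (n + 1))) (τ : Perm (Fin n)) :
    restrictLast (σ * liftLast n τ) = restrictLast σ * τ := by
  rw [restrictLast, Equiv.permCongr_mul, permCongr_liftLast, removeNone_mul_optionCongr]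
  rfl

theorem restrictLast_liftLast (τ : Perm (Fin n)) : restrictLast (liftLast n τ) = τ := by
  rw [restrictLast, permCongr_liftLast, removeNone_optionCongr]

theorem liftLast_restrictLast {ρ : Perm (Fin (n + 1))} (hρ : ρ (Fin.last n) = Fin.last n) :
    liftLast n (restrictLast ρ) = ρ := by
  apply finSuccEquivLast.permCongr.injective
  rw [permCongr_liftLast, restrictLast, map_equiv_removeNone, permCongr_apply,
    finSuccEquivLast_symm_none, hρ, finSuccEquivLast_last, swap_self, ← Perm.one_def, one_mul]

theorem sum_ite_apply_last_eq_sum_liftLast {M : Type*} [AddCommMonoid M]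
    (f : Perm (Fin (n + 1)) → M) :
    ∑ ρ, (if ρ (Fin.last n) = Fin.last n then f ρ else 0) = ∑ τ, f (liftLast n τ) := by
  have himage : Finset.univ.filter (fun ρ : Perm (Fin (n + 1)) => ρ (Fin.last n) = Fin.last n) =
      Finset.univ.image (liftLast n) := by
    ext ρ
    simp only [Finset.mem_filter, Finset.mem_univ, true_and, Finset.mem_image]
    exact ⟨fun h => ⟨_, liftLast_restrictLast h⟩,
      by rintro ⟨τ, -, rfl⟩; exact liftLast_apply_last τ⟩
  rw [← Finset.sum_filter, himage, Finset.sum_image fun σ _ τ _ h => by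
    rw [← restrictLast_liftLast σ, h, restrictLast_liftLast]]

end LiftLast

theorem Matrix.isUnit_mul_transpose_of_linearIndependent_rows {m n R : Type*} [Fintype m]
    [Fintype n] [DecidableEq m] [Field R] [LinearOrder R] [IsStrictOrderedRing R]
    {A : Matrix m n R} (hA : LinearIndependent R A.row) : IsUnit (A * Aᵀ) := by
  have hker := ker_mulVecLin_transpose_mul_self Aᵀ
  rw [transpose_transpose] at hker
  rw [← mulVec_injective_iff_isUnit, ← coe_mulVecLin, ← LinearMap.ker_eq_bot, hker,
    LinearMap.ker_eq_bot, coe_mulVecLin]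
  convert vecMul_injective_iff.2 hA using 1
  exact funext (mulVec_transpose A)

section PermTensorMatrix

variable (α β : Type*) [Fintype α] [DecidableEq α] [Fintype β] [DecidableEq β]

/-- Row `σ` is the permutation operator of `σ` on `(ℝ^β)^{⊗α}`, flattened. -/
noncomputable def permTensorMatrix : Matrix (Perm α) ((α → β) × (α → β)) ℝ :=
  of fun σ p => if p.1 ∘ σ = p.2 then 1 else 0

theorem permTensorMatrix_mul_transpose_apply (σ τ : Perm α) :
    (permTensorMatrix α β * (permTensorMatrix α β)ᵀ) σ τ =
      Nat.card {g : α → β // g ∘ ⇑(σ * τ⁻¹) = g} := by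
  have hcomp (g : α → β) : g ∘ τ = g ∘ σ ↔ g ∘ ⇑(σ * τ⁻¹) = g := by
    rw [coe_mul, ← Function.comp_assoc, Perm.inv_def, Equiv.comp_symm_eq, eq_comm]
  simp only [Matrix.mul_apply, transpose_apply, permTensorMatrix, of_apply,
    Fintype.sum_prod_type, ite_mul, one_mul, zero_mul, Finset.sum_ite_eq, Finset.mem_univ,
    if_true, hcomp]
  rw [Finset.sum_boole, Nat.card_eq_fintype_card, Fintype.card_subtype]

theorem linearIndependent_permTensorMatrix_rows (h : Fintype.card α ≤ Fintype.card β) :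
    LinearIndependent ℝ (permTensorMatrix α β).row := by
  obtain ⟨ι⟩ := Function.Embedding.nonempty_of_card_le h
  rw [Fintype.linearIndependent_iff]
  intro c hc σ₀
  have hσ (σ : Perm α) : ι ∘ ⇑σ₀.symm ∘ σ = ι ↔ σ = σ₀ := by
    refine ⟨fun h => ?_, fun h => by simp [h]⟩
    ext a
    exact σ₀.symm_apply_eq.1 (congrFun (ι.injective.comp_left h) a)
  have := congrFun hc (ι ∘ ⇑σ₀⁻¹, ι)
  simpa [permTensorMatrix, Function.comp_assoc, hσ] using this

end PermTensorMatrix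

theorem Gram_eq_permTensorMatrix_mul_transpose (k q : ℕ) :
    Gram k q = permTensorMatrix (Fin k) (Fin q) * (permTensorMatrix (Fin k) (Fin q))ᵀ := by
  ext σ τ
  rw [permTensorMatrix_mul_transpose_apply, card_comp_eq_self, Nat.card_fin, ← cyc_eq_card_parts]
  simp [Gram]

theorem isUnit_Gram {k q : ℕ} (h : k ≤ q) : IsUnit (Gram k q) := by
  rw [Gram_eq_permTensorMatrix_mul_transpose]
  exact isUnit_mul_transpose_of_linearIndependent_rows
    (linearIndependent_permTensorMatrix_rows _ _ (by simpa using h))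

theorem Gram_transpose (k q : ℕ) : (Gram k q)ᵀ = Gram k q := by
  ext σ τ
  simp only [Gram, transpose_apply, of_apply]
  rw [← cyc_inv, _root_.mul_inv_rev, inv_inv]

theorem Gram_mulVec_eq_iff {k d D : ℕ} (h : k ≤ d * D) (θ : Perm (Fin k))
    (u : Perm (Fin k) → ℝ) :
    Gram k (d * D) *ᵥ u = (fun σ => (d : ℝ) ^ cyc σ * (D : ℝ) ^ cyc (σ * θ⁻¹)) ↔
      u = fun τ => Ck k d D τ θ := by
  have hG := (isUnit_iff_isUnit_det _).1 (isUnit_Gram h)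
  have hCk : (fun τ => Ck k d D τ θ) =
      (Gram k (d * D))⁻¹ *ᵥ fun σ => (d : ℝ) ^ cyc σ * (D : ℝ) ^ cyc (σ * θ⁻¹) := by
    ext τ
    rw [← transpose_transpose (Gram k (d * D))⁻¹, transpose_nonsing_inv, Gram_transpose]
    simp only [Ck, WgM, of_apply, mulVec, dotProduct, transpose_apply, mul_assoc]
  rw [hCk]
  constructor
  · rintro hu
    rw [← hu, mulVec_mulVec, nonsing_inv_mul _ hG, one_mulVec]
  · rintro rfl
    rw [mulVec_mulVec, mul_nonsing_inv _ hG, one_mulVec]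

theorem mul_liftLast_apply_last {n : ℕ} (σ : Perm (Fin (n + 1))) (τ : Perm (Fin n)) :
    (σ * liftLast n τ) (Fin.last n) = σ (Fin.last n) := by
  rw [Perm.mul_apply, liftLast_apply_last]

theorem Gram_succ_mulVec_extend_Ck {n d D : ℕ} (h : n ≤ d * D) (θ : Perm (Fin n)) :
    Gram (n + 1) (d * D) *ᵥ
        (fun τ => if τ (Fin.last n) = Fin.last n then Ck n d D (restrictLast τ) θ else 0) =
      fun σ => (d : ℝ) ^ cyc σ * (D : ℝ) ^ cyc (σ * (liftLast n θ)⁻¹) := by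
  have hcol := (Gram_mulVec_eq_iff h θ _).2 rfl
  ext σ
  set q : ℝ := ((d * D : ℕ) : ℝ)
  set ε := if σ (Fin.last n) = Fin.last n then 1 else 0
  have hcyc (τ : Perm (Fin n)) :
      cyc (σ * (liftLast n τ)⁻¹) = cyc (restrictLast σ * τ⁻¹) + ε := by
    rw [← map_inv, cyc_eq_cyc_restrictLast_add, restrictLast_mul_liftLast,
      mul_liftLast_apply_last]
  calc (Gram (n + 1) (d * D) *ᵥ _) σ
      = ∑ ρ, if ρ (Fin.last n) = Fin.last n then
          q ^ cyc (σ * ρ⁻¹) * Ck n d D (restrictLast ρ) θ else 0 := by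
        simp only [mulVec, dotProduct, Gram, of_apply, mul_ite, mul_zero, q]
    _ = ∑ τ, q ^ cyc (σ * (liftLast n τ)⁻¹) * Ck n d D (restrictLast (liftLast n τ)) θ :=
        sum_ite_apply_last_eq_sum_liftLast _
    _ = q ^ ε * (Gram n (d * D) *ᵥ fun τ => Ck n d D τ θ) (restrictLast σ) := by
        simp only [hcyc, restrictLast_liftLast, pow_add, mulVec, dotProduct, Gram, of_apply,
          Finset.mul_sum, q]
        exact Finset.sum_congr rfl fun τ _ => by ring
    _ = _ := by
        rw [hcol, cyc_eq_cyc_restrictLast_add σ, hcyc, pow_add, pow_add]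
        simp only [q, Nat.cast_mul, mul_pow]
        ring

theorem Ck_block_triangular_general (n d D : ℕ) (hkdD : n + 1 ≤ d * D)
    (τ θ : Equiv.Perm (Fin (n + 1)))
    (hθ : θ (Fin.last n) = Fin.last n) :
    Ck (n + 1) d D τ θ =
      if τ (Fin.last n) = Fin.last n then
        Ck n d D (restrictLast τ) (restrictLast θ)
      else 0 := by
  obtain ⟨θ, rfl⟩ : ∃ θ', liftLast n θ' = θ := ⟨_, liftLast_restrictLast hθ⟩
  have hcol :=
    (Gram_mulVec_eq_iff hkdD _ _).1 (Gram_succ_mulVec_extend_Ck (by omega) θ)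
  rw [restrictLast_liftLast]
  exact (congrFun hcol τ).symm

/-- Block-triangular structure of the transfer matrix: for `θ` fixing the last point,
`⟨τ|C_k|θ⟩ = δ_{k,τ(k)} ⟨τ↓|C_{k-1}|θ↓⟩` (with `k = n + 1 ≥ 3`). -/
theorem Ck_block_triangular (n d D : ℕ) (hn : 2 ≤ n) (hd : 0 < d) (hD : 0 < D)
    (hkdD : n + 1 ≤ d * D) (τ θ : Equiv.Perm (Fin (n + 1)))
    (hθ : θ (Fin.last n) = Fin.last n) :
    Ck (n + 1) d D τ θ =
      if τ (Fin.last n) = Fin.last n then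
        Ck n d D (restrictLast τ) (restrictLast θ)
      else 0 :=
  Ck_block_triangular_general n d D hkdD τ θ hθ
end

section
/- Let k ≥ 2 and let d, D be positive integers with k ≤ dD. For ρ ∈ S_k, let T_ρ ∈ ℝ^{k!×k!} be the matrix with entries ⟨τ|T_ρ|θ⟩ = Σ_{σ∈S_k} Wg(στ⁻¹, dD) d^{#(σρ)} D^{#(σθ⁻¹)}, and let Q_ρ = Σ_{π∈S_k} |ρπ⟩⟨π| be the permutation matrix of left multiplication by ρ. Then T_ρ = Q_ρᵀ C_k Q_ρ, i.e., ⟨τ|T_ρ|θ⟩ = ⟨ρτ|C_k|ρθ⟩ for all τ, θ ∈ S_k. In particular every T_ρ is similar to C_k = T_e. -/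
open Equiv Matrix

/-- Transfer matrix `⟨τ|T_ρ|θ⟩ = Σ_σ Wg(στ⁻¹, dD) d^{#(σρ)} D^{#(σθ⁻¹)}`. -/
noncomputable def Tmat (k d D : ℕ) (ρ : Equiv.Perm (Fin k)) :
    Matrix (Equiv.Perm (Fin k)) (Equiv.Perm (Fin k)) ℝ :=
  Matrix.of fun τ θ =>
    ∑ σ : Equiv.Perm (Fin k),
      WgM k (d * D) σ τ * (d : ℝ) ^ cyc (σ * ρ) * (D : ℝ) ^ cyc (σ * θ⁻¹)

/-- Permutation matrix `Q_ρ = Σ_π |ρπ⟩⟨π|` of left multiplication by `ρ`. -/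
noncomputable def Qmat (k : ℕ) (ρ : Equiv.Perm (Fin k)) :
    Matrix (Equiv.Perm (Fin k)) (Equiv.Perm (Fin k)) ℝ :=
  Matrix.of fun π π' => if π = ρ * π' then 1 else 0

lemma cyc_conj {k : ℕ} (ρ σ : Equiv.Perm (Fin k)) : cyc (ρ * σ * ρ⁻¹) = cyc σ := by
  unfold cyc; rw [Equiv.Perm.cycleType_conj]

lemma wgm_inv {k q : ℕ} (ρ σ τ : Equiv.Perm (Fin k)) :
    WgM k q (ρ * σ) (ρ * τ) = WgM k q σ τ := by
  have hG : (Gram k q).submatrix (Equiv.mulLeft ρ) (Equiv.mulLeft ρ) = Gram k q := by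
    ext σ τ
    simp only [Matrix.submatrix_apply, Gram, Matrix.of_apply, Equiv.coe_mulLeft]
    rw [show ρ * σ * (ρ * τ)⁻¹ = ρ * (σ * τ⁻¹) * ρ⁻¹ by group, cyc_conj]
  have := Matrix.inv_submatrix_equiv (Gram k q) (Equiv.mulLeft ρ) (Equiv.mulLeft ρ)
  rw [hG] at this
  calc WgM k q (ρ * σ) (ρ * τ)
      = ((Gram k q)⁻¹).submatrix (Equiv.mulLeft ρ) (Equiv.mulLeft ρ) σ τ := rfl
    _ = WgM k q σ τ := by rw [← this]; rfl

/-- `T_ρ = Q_ρᵀ C_k Q_ρ`, i.e. `⟨τ|T_ρ|θ⟩ = ⟨ρτ|C_k|ρθ⟩`; in particular every `T_ρ`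
is similar to `C_k = T_e`. -/
theorem Tmat_similar_Ck (k d D : ℕ) (hk : 2 ≤ k) (hd : 0 < d) (hD : 0 < D)
    (hkdD : k ≤ d * D) (ρ : Equiv.Perm (Fin k)) :
    Tmat k d D ρ = (Qmat k ρ)ᵀ * Ck k d D * Qmat k ρ ∧
    (∀ τ θ : Equiv.Perm (Fin k), Tmat k d D ρ τ θ = Ck k d D (ρ * τ) (ρ * θ)) := by
  have key : ∀ τ θ : Equiv.Perm (Fin k), Tmat k d D ρ τ θ = Ck k d D (ρ * τ) (ρ * θ) := by
    intro τ θ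
    simp only [Tmat, Ck, Matrix.of_apply]
    refine Fintype.sum_equiv (Equiv.mulLeft ρ) _ _ fun σ => ?_
    simp only [Equiv.coe_mulLeft]
    rw [wgm_inv, show ρ * σ * (ρ * θ)⁻¹ = ρ * (σ * θ⁻¹) * ρ⁻¹ by group, cyc_conj,
      show ρ * σ = ρ * (σ * ρ) * ρ⁻¹ by group, cyc_conj]
  refine ⟨?_, key⟩
  ext τ θ
  rw [key]
  simp only [Matrix.mul_apply, Matrix.transpose_apply, Qmat, Matrix.of_apply]
  simp [ite_mul, mul_ite, Finset.sum_ite_eq, Finset.sum_ite_eq']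
end
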